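/- Let O be an ALCI-ontology, A₀ a concept name, and q a connected Boolean conjunctive query. Fix two abstraction levels L ≺ L', let q̂ be the full CQ obtained from q by making all variables answer variables, and let O' be the ALCI^abs[ca]-ontology consisting of C ⊑_L D for every C ⊑ D ∈ O together with the concept abstraction L':⊥ abstracts L:q̂. Then A₀ is L-satisfiable with respect to O' if and only if O, A₀ ⊭ q. -/

import Mathlib

set_option maxHeartbeats 1000000

namespace DLAbs

/-! # Basic syntax of description logics with abstraction and refinement

Concept names, role names, variables and abstraction levels are represented
by natural numbers. -/

/-- A role: a role name or an inverse role. -/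
inductive Role where
  | name (r : ℕ)
  | inv  (r : ℕ)
deriving DecidableEq

/-- `R⁻`, with `(r⁻)⁻ = r`. -/
def Role.flip : Role → Role
  | .name r => .inv r
  | .inv r  => .name r

/-- The underlying role name of a role. -/
def Role.base : Role → ℕ
  | .name r => r
  | .inv r  => r

/-- A role is a plain role name (no inverse). -/
def Role.IsName : Role → Prop
  | .name _ => True
  | .inv _  => False

/-- ALCI-concepts. -/
inductive Concept where
  | atom (A : ℕ)
  | neg  (C : Concept)
  | conj (C D : Concept)
  | disj (C D : Concept)
  | ex   (R : Role) (C : Concept)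
  | all  (R : Role) (C : Concept)
deriving DecidableEq

/-- `⊤` is an abbreviation for `A ⊔ ¬A` with `A` a fixed concept name. -/
def Concept.top : Concept := .disj (.atom 0) (.neg (.atom 0))

/-- `⊥` is an abbreviation for `¬⊤`. -/
def Concept.bot : Concept := .neg Concept.top

/-- ALC-concepts: no inverse roles. -/
def Concept.IsALC : Concept → Prop
  | .atom _ => True
  | .neg C => C.IsALC
  | .conj C D => C.IsALC ∧ D.IsALC
  | .disj C D => C.IsALC ∧ D.IsALC
  | .ex R C => R.IsName ∧ C.IsALC
  | .all R C => R.IsName ∧ C.IsALC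

/-- EL-concepts: only concept names, `⊓` and `∃r.C` (no inverse roles). -/
def Concept.IsEL : Concept → Prop
  | .atom _ => True
  | .neg _ => False
  | .conj C D => C.IsEL ∧ D.IsEL
  | .disj _ _ => False
  | .ex R C => R.IsName ∧ C.IsEL
  | .all _ _ => False

/-- Concept names occurring in a concept. -/
def Concept.cnames : Concept → List ℕ
  | .atom A => [A]
  | .neg C => C.cnames
  | .conj C D => C.cnames ++ D.cnames
  | .disj C D => C.cnames ++ D.cnames
  | .ex _ C => C.cnames
  | .all _ C => C.cnames

/-- Role names occurring in a concept. -/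
def Concept.rnames : Concept → List ℕ
  | .atom _ => []
  | .neg C => C.rnames
  | .conj C D => C.rnames ++ D.rnames
  | .disj C D => C.rnames ++ D.rnames
  | .ex R C => R.base :: C.rnames
  | .all R C => R.base :: C.rnames

/-- Size of a concept. -/
def Concept.size : Concept → ℕ
  | .atom _ => 1
  | .neg C => C.size + 1
  | .conj C D => C.size + D.size + 1
  | .disj C D => C.size + D.size + 1
  | .ex _ C => C.size + 2
  | .all _ C => C.size + 2

/-- An interpretation with domain contained in the carrier type `α`.
(Nonemptiness of the domain is required separately where appropriate.) -/
structure Interp (α : Type) where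
  dom : Set α
  cname : ℕ → Set α
  rname : ℕ → Set (α × α)
  cname_sub : ∀ A, cname A ⊆ dom
  rname_sub : ∀ r p, p ∈ rname r → p.1 ∈ dom ∧ p.2 ∈ dom

/-- Interpretation of a (possibly inverse) role. -/
def Interp.role {α} (I : Interp α) : Role → Set (α × α)
  | .name r => I.rname r
  | .inv r  => {p | (p.2, p.1) ∈ I.rname r}

/-- Semantics of concepts. -/
def Interp.sem {α} (I : Interp α) : Concept → Set α
  | .atom A => I.cname A
  | .neg C => I.dom \ I.sem C
  | .conj C D => I.sem C ∩ I.sem D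
  | .disj C D => I.sem C ∪ I.sem D
  | .ex R C => {d | d ∈ I.dom ∧ ∃ e, (d, e) ∈ I.role R ∧ e ∈ I.sem C}
  | .all R C => {d | d ∈ I.dom ∧ ∀ e, (d, e) ∈ I.role R → e ∈ I.sem C}

/-- A conjunctive query: concept atoms `C(x)`, role atoms `r(x,y)` (`r` a role
name), and a tuple of answer variables.  Variables not occurring in `ans` are
existentially quantified. -/
structure CQ where
  cas : List (Concept × ℕ)
  ras : List (ℕ × ℕ × ℕ)
  ans : List ℕ
deriving DecidableEq

/-- The variables occurring in atoms of a CQ. -/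
def CQ.atomVars (q : CQ) : List ℕ :=
  q.cas.map Prod.snd ++ q.ras.flatMap (fun p => [p.2.1, p.2.2])

/-- All variables of a CQ. -/
def CQ.vars (q : CQ) : List ℕ := q.ans ++ q.atomVars

/-- A CQ is full if it has no quantified variables. -/
def CQ.Full (q : CQ) : Prop := (∀ v ∈ q.atomVars, v ∈ q.ans) ∧ q.ans.Nodup

/-- The undirected edge relation on variables induced by the role atoms. -/
def CQ.edge (q : CQ) (a b : ℕ) : Prop :=
  ∃ p ∈ q.ras, (p.2.1 = a ∧ p.2.2 = b) ∨ (p.2.1 = b ∧ p.2.2 = a)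

/-- A CQ is connected. -/
def CQ.Connected (q : CQ) : Prop :=
  ∀ u ∈ q.vars, ∀ v ∈ q.vars, Relation.ReflTransGen q.edge u v

/-- `h` is a homomorphism from `q` to `I`. -/
def CQ.Hom {α} (q : CQ) (I : Interp α) (h : ℕ → α) : Prop :=
  (∀ v ∈ q.vars, h v ∈ I.dom) ∧
  (∀ p ∈ q.cas, h p.2 ∈ I.sem p.1) ∧
  (∀ p ∈ q.ras, (h p.2.1, h p.2.2) ∈ I.rname p.1)

/-- The answers `q(I)` to `q` on `I`, as tuples (lists) indexed by `q.ans`. -/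
def CQ.answers {α} (q : CQ) (I : Interp α) : Set (List α) :=
  {t | ∃ h, q.Hom I h ∧ t = q.ans.map h}

def CQ.cnames (q : CQ) : List ℕ := q.cas.flatMap (fun p => p.1.cnames)

def CQ.rnames (q : CQ) : List ℕ :=
  q.cas.flatMap (fun p => p.1.rnames) ++ q.ras.map (fun p => p.1)

def CQ.size (q : CQ) : ℕ :=
  (q.cas.map (fun p => p.1.size + 1)).sum + 3 * q.ras.length + q.ans.length + 1

/-- Statements of abstraction DLs.
* `ci L C D`: the labeled concept inclusion `C ⊑_L D`;
* `ri L R S`: the labeled role inclusion `R ⊑_L S`;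
* `cref L q L' C`: the concept refinement `L:q(x̄) refines L':C`;
* `cabs L' C L q`: the concept abstraction `L':C abstracts L:q(x̄)`;
* `rref L q nx L' C1 R C2`: the role refinement
  `L:q(x̄,ȳ) refines L':(C1(x) ∧ R(x,y) ∧ C2(y))`, where `x̄` consists of the
  first `nx` answer variables of `q` and `ȳ` of the remaining ones;
* `rabs L' R L q nx`: the role abstraction `L':R abstracts L:q(x̄,ȳ)`, with the
  same convention for the split of the answer variables. -/
inductive Stmt where
  | ci   (L : ℕ) (C D : Concept)
  | ri   (L : ℕ) (R S : Role)
  | cref (L : ℕ) (q : CQ) (L' : ℕ) (C : Concept)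
  | cabs (L' : ℕ) (C : Concept) (L : ℕ) (q : CQ)
  | rref (L : ℕ) (q : CQ) (nx : ℕ) (L' : ℕ) (C1 : Concept) (R : Role) (C2 : Concept)
  | rabs (L' : ℕ) (R : Role) (L : ℕ) (q : CQ) (nx : ℕ)
deriving DecidableEq

/-- Syntactic side conditions on the CQs in a statement: CQs in refinement and
abstraction statements are full, CQs in abstraction statements are moreover
connected, and in role refinements/abstractions both tuples are nonempty. -/
def Stmt.WfCQ : Stmt → Prop
  | .ci _ _ _ => True
  | .ri _ _ _ => True
  | .cref _ q _ _ => q.Full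
  | .cabs _ _ _ q => q.Full ∧ q.Connected
  | .rref _ q nx _ _ _ _ => q.Full ∧ 0 < nx ∧ nx < q.ans.length
  | .rabs _ _ _ q nx => q.Full ∧ q.Connected ∧ 0 < nx ∧ nx < q.ans.length

def Stmt.lvls : Stmt → List ℕ
  | .ci L _ _ => [L]
  | .ri L _ _ => [L]
  | .cref L _ L' _ => [L, L']
  | .cabs L' _ L _ => [L, L']
  | .rref L _ _ L' _ _ _ => [L, L']
  | .rabs L' _ L _ _ => [L, L']

def Stmt.cnames : Stmt → List ℕ
  | .ci _ C D => C.cnames ++ D.cnames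
  | .ri _ _ _ => []
  | .cref _ q _ C => q.cnames ++ C.cnames
  | .cabs _ C _ q => q.cnames ++ C.cnames
  | .rref _ q _ _ C1 _ C2 => q.cnames ++ C1.cnames ++ C2.cnames
  | .rabs _ _ _ q _ => q.cnames

def Stmt.rnames : Stmt → List ℕ
  | .ci _ C D => C.rnames ++ D.rnames
  | .ri _ R S => [R.base, S.base]
  | .cref _ q _ C => q.rnames ++ C.rnames
  | .cabs _ C _ q => q.rnames ++ C.rnames
  | .rref _ q _ _ C1 R C2 => q.rnames ++ C1.rnames ++ C2.rnames ++ [R.base]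
  | .rabs _ R _ q _ => q.rnames ++ [R.base]

def Stmt.size : Stmt → ℕ
  | .ci _ C D => C.size + D.size + 2
  | .ri _ _ _ => 4
  | .cref _ q _ C => q.size + C.size + 2
  | .cabs _ C _ q => q.size + C.size + 2
  | .rref _ q _ _ C1 _ C2 => q.size + C1.size + C2.size + 6
  | .rabs _ _ _ q _ => q.size + 6

/-- The abstraction levels occurring in an ontology. -/
def ontLvls (O : List Stmt) : List ℕ := O.flatMap Stmt.lvls

/-- The concept names occurring in an ontology. -/
def ontCnames (O : List Stmt) : List ℕ := O.flatMap Stmt.cnames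

/-- The role names occurring in an ontology. -/
def ontRnames (O : List Stmt) : List ℕ := O.flatMap Stmt.rnames

/-- The size `‖O‖` of an ontology. -/
def ontSize (O : List Stmt) : ℕ := (O.map Stmt.size).sum + 1

/-- An A-interpretation: a set of abstraction levels, a relation `≺` on them,
one interpretation per level, and a partial refinement function `ρ`.  The
structural requirements are collected in `AInterp.Wf`, `AInterp.IsValid` and
`AInterp.IsValidDAG` below. -/
structure AInterp (α : Type) where
  levels : Set ℕ
  prec : ℕ → ℕ → Prop
  interp : ℕ → Interp α
  rho : α → ℕ → Option (List α)

/-- The directed graph `(V, E)` is a tree. -/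
def IsTreeGraph (V : Set ℕ) (E : ℕ → ℕ → Prop) : Prop :=
  ∃ root ∈ V, (∀ u, ¬ E u root) ∧
    (∀ v ∈ V, v ≠ root → ∃! u, u ∈ V ∧ E u v) ∧
    (∀ v ∈ V, Relation.ReflTransGen (fun a b => a ∈ V ∧ b ∈ V ∧ E a b) root v)

/-- The directed graph `(V, E)` is a DAG. -/
def IsDAGGraph (V : Set ℕ) (E : ℕ → ℕ → Prop) : Prop :=
  (∀ a b, E a b → a ∈ V ∧ b ∈ V) ∧ (∀ v, ¬ Relation.TransGen E v v)

/-- Structural conditions on A-interpretations (without the condition on the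
shape of the level graph): levels carry nonempty pairwise disjoint domains,
`≺` relates only levels of the interpretation, and the refinement function
assigns to `(d, L)` with `L ≺ L(d)` nonempty tuples over `Δ^{I_L}` such that
every element participates in at most one ensemble of its own level. -/
def AInterp.Wf {α} (I : AInterp α) : Prop :=
  (∀ L ∈ I.levels, (I.interp L).dom.Nonempty) ∧
  (∀ L, L ∉ I.levels → (I.interp L).dom = ∅) ∧
  (∀ L L', L ≠ L' → ∀ d, d ∈ (I.interp L).dom → d ∉ (I.interp L').dom) ∧
  (∀ L L', I.prec L L' → L ∈ I.levels ∧ L' ∈ I.levels) ∧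
  (∀ d L t, I.rho d L = some t →
      t ≠ [] ∧ (∀ e ∈ t, e ∈ (I.interp L).dom) ∧
      ∃ L', d ∈ (I.interp L').dom ∧ I.prec L L') ∧
  (∀ L d d' t t', I.rho d L = some t → I.rho d' L = some t' →
      ∀ e, e ∈ t → e ∈ t' → d = d')

/-- A valid A-interpretation: the level graph `(A_I, {(L',L) | L ≺ L'})` is a
tree. -/
def AInterp.IsValid {α} (I : AInterp α) : Prop :=
  I.Wf ∧ IsTreeGraph I.levels (fun a b => I.prec b a)

/-- A-interpretations under the DAG semantics: the level graph is only
required to be a directed acyclic graph. -/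
def AInterp.IsValidDAG {α} (I : AInterp α) : Prop :=
  I.Wf ∧ IsDAGGraph I.levels (fun a b => I.prec b a)

/-- The repetition-free semantics: every ensemble is a repetition-free
tuple. -/
def AInterp.RepFree {α} (I : AInterp α) : Prop :=
  ∀ d L t, I.rho d L = some t → t.Nodup

/-- Satisfaction of statements in an A-interpretation. -/
def AInterp.sat {α} (I : AInterp α) : Stmt → Prop
  | .ci L C D => L ∈ I.levels ∧ (I.interp L).sem C ⊆ (I.interp L).sem D
  | .ri L R S => L ∈ I.levels ∧ (I.interp L).role R ⊆ (I.interp L).role S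
  | .cref L q L' C => I.prec L L' ∧
      ∀ d ∈ (I.interp L').sem C, ∃ t ∈ q.answers (I.interp L), I.rho d L = some t
  | .cabs L' C L q => I.prec L L' ∧
      ∀ t ∈ q.answers (I.interp L), ∃ d ∈ (I.interp L').sem C, I.rho d L = some t
  | .rref L q nx L' C1 R C2 => I.prec L L' ∧
      ∀ d1 d2, d1 ∈ (I.interp L').sem C1 → d2 ∈ (I.interp L').sem C2 →
        (d1, d2) ∈ (I.interp L').role R →
        ∃ h, q.Hom (I.interp L) h ∧
          I.rho d1 L = some ((q.ans.take nx).map h) ∧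
          I.rho d2 L = some ((q.ans.drop nx).map h)
  | .rabs L' R L q nx => I.prec L L' ∧
      ∀ h, q.Hom (I.interp L) h →
        ∃ d1 d2, (d1, d2) ∈ (I.interp L').role R ∧
          I.rho d1 L = some ((q.ans.take nx).map h) ∧
          I.rho d2 L = some ((q.ans.drop nx).map h)

/-- `C` is `L`-satisfiable w.r.t. the ontology `O` (given as a set of
statements). -/
def SatSet (O : Set Stmt) (C : Concept) (L : ℕ) : Prop :=
  ∃ (α : Type) (I : AInterp α), I.IsValid ∧ (∀ s ∈ O, I.sat s) ∧
    ((I.interp L).sem C).Nonempty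

/-- `L`-satisfiability under the repetition-free semantics. -/
def SatSetRF (O : Set Stmt) (C : Concept) (L : ℕ) : Prop :=
  ∃ (α : Type) (I : AInterp α), I.IsValid ∧ I.RepFree ∧ (∀ s ∈ O, I.sat s) ∧
    ((I.interp L).sem C).Nonempty

/-- `L`-satisfiability under the DAG semantics. -/
def SatSetDAG (O : Set Stmt) (C : Concept) (L : ℕ) : Prop :=
  ∃ (α : Type) (I : AInterp α), I.IsValidDAG ∧ (∀ s ∈ O, I.sat s) ∧
    ((I.interp L).sem C).Nonempty

def SatList (O : List Stmt) (C : Concept) (L : ℕ) : Prop :=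
  SatSet {s | s ∈ O} C L

def SatListRF (O : List Stmt) (C : Concept) (L : ℕ) : Prop :=
  SatSetRF {s | s ∈ O} C L

def SatListDAG (O : List Stmt) (C : Concept) (L : ℕ) : Prop :=
  SatSetDAG {s | s ∈ O} C L

/-! ## Ordinary (one-level) ontologies -/

/-- An ordinary ontology is a finite list of concept inclusions `C ⊑ D`. -/
def Interp.IsPlainModel {α} (I : Interp α) (O : List (Concept × Concept)) : Prop :=
  I.dom.Nonempty ∧ ∀ p ∈ O, I.sem p.1 ⊆ I.sem p.2

/-- `O, A ⊨ q`: every model of `O` in which the concept name `A` is nonempty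
satisfies the Boolean CQ `q`. -/
def EntailsCQ (O : List (Concept × Concept)) (A : ℕ) (q : CQ) : Prop :=
  ∀ (α : Type) (I : Interp α), I.IsPlainModel O → (I.cname A).Nonempty →
    ∃ h, q.Hom I h

def plainCnames (O : List (Concept × Concept)) : List ℕ :=
  O.flatMap (fun p => p.1.cnames ++ p.2.cnames)

def plainRnames (O : List (Concept × Concept)) : List ℕ :=
  O.flatMap (fun p => p.1.rnames ++ p.2.rnames)

def bigConj (l : List Concept) : Concept := l.foldr Concept.conj Concept.top

def bigDisj (l : List Concept) : Concept := l.foldr Concept.disj Concept.bot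

lemma Interp.sem_bot {α} (I : Interp α) : I.sem Concept.bot = ∅ := by
  ext d
  simp only [Concept.bot, Concept.top, Interp.sem, Set.mem_diff, Set.mem_union,
    Set.mem_empty_iff_false, iff_false, not_and, not_not]
  intro hd
  tauto

/-- Embed an interpretation into a sum type. -/
def liftInterp {α} (I : Interp α) : Interp (α ⊕ Unit) where
  dom := Sum.inl '' I.dom
  cname A := Sum.inl '' I.cname A
  rname r := {p | ∃ a b, p = (Sum.inl a, Sum.inl b) ∧ (a, b) ∈ I.rname r}
  cname_sub := by
    rintro A x ⟨a, ha, rfl⟩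
    exact ⟨a, I.cname_sub A ha, rfl⟩
  rname_sub := by
    rintro r p ⟨a, b, rfl, hab⟩
    have := I.rname_sub r (a, b) hab
    exact ⟨⟨a, this.1, rfl⟩, ⟨b, this.2, rfl⟩⟩

lemma liftInterp_role {α} (I : Interp α) (R : Role) :
    (liftInterp I).role R
      = {p | ∃ a b, p = (Sum.inl a, Sum.inl b) ∧ (a, b) ∈ I.role R} := by
  cases R with
  | name r => rfl
  | inv r =>
    ext ⟨x, y⟩
    constructor
    · rintro ⟨a, b, hp, hab⟩
      have hx : y = Sum.inl a := congrArg Prod.fst hp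
      have hy : x = Sum.inl b := congrArg Prod.snd hp
      exact ⟨b, a, by simp [hx, hy], hab⟩
    · rintro ⟨a, b, hp, hab⟩
      have hx : x = Sum.inl a := congrArg Prod.fst hp
      have hy : y = Sum.inl b := congrArg Prod.snd hp
      exact ⟨b, a, by simp [hx, hy], hab⟩

lemma liftInterp_sem {α} (I : Interp α) (C : Concept) :
    (liftInterp I).sem C = Sum.inl '' I.sem C := by
  induction C with
  | atom A => rfl
  | neg C ih =>
    show (liftInterp I).dom \ (liftInterp I).sem C = _
    rw [ih]
    show Sum.inl '' I.dom \ Sum.inl '' I.sem C = _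
    exact (Set.image_diff Sum.inl_injective _ _).symm
  | conj C D ihC ihD =>
    show (liftInterp I).sem C ∩ (liftInterp I).sem D = _
    rw [ihC, ihD]
    exact (Set.image_inter Sum.inl_injective).symm ▸ rfl
  | disj C D ihC ihD =>
    show (liftInterp I).sem C ∪ (liftInterp I).sem D = _
    rw [ihC, ihD, ← Set.image_union]
    rfl
  | ex R C ih =>
    ext d
    constructor
    · rintro ⟨⟨a, ha, rfl⟩, e, hrole, hsem⟩
      rw [liftInterp_role] at hrole
      obtain ⟨a', b, heq, hab⟩ := hrole
      have ha' : (Sum.inl a : α ⊕ Unit) = Sum.inl a' := congrArg Prod.fst heq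
      have hb : e = Sum.inl b := congrArg Prod.snd heq
      rw [ih] at hsem
      obtain ⟨b', hb', hbb⟩ := hsem
      have : b' = b := Sum.inl_injective (hbb.trans hb)
      refine ⟨a, ⟨ha, b, ?_, this ▸ hb'⟩, rfl⟩
      have : a = a' := Sum.inl_injective ha'
      exact this ▸ hab
    · rintro ⟨a, ⟨ha, e, hrole, hsem⟩, rfl⟩
      refine ⟨⟨a, ha, rfl⟩, Sum.inl e, ?_, ?_⟩
      · rw [liftInterp_role]; exact ⟨a, e, rfl, hrole⟩
      · rw [ih]; exact ⟨e, hsem, rfl⟩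
  | all R C ih =>
    ext d
    constructor
    · rintro ⟨⟨a, ha, rfl⟩, hall⟩
      refine ⟨a, ⟨ha, fun e he => ?_⟩, rfl⟩
      have : (Sum.inl a, Sum.inl e) ∈ (liftInterp I).role R := by
        rw [liftInterp_role]; exact ⟨a, e, rfl, he⟩
      have := hall _ this
      rw [ih] at this
      obtain ⟨e', he', hee⟩ := this
      exact (Sum.inl_injective hee) ▸ he'
    · rintro ⟨a, ⟨ha, hall⟩, rfl⟩
      refine ⟨⟨a, ha, rfl⟩, fun e he => ?_⟩
      rw [liftInterp_role] at he
      obtain ⟨a', b, heq, hab⟩ := he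
      have ha' : a = a' := Sum.inl_injective (congrArg Prod.fst heq)
      have hb : e = Sum.inl b := congrArg Prod.snd heq
      rw [ih, hb]
      exact ⟨b, hall b (ha' ▸ hab), rfl⟩

/-- The one-point interpretation. -/
def unitInterp (α : Type) : Interp (α ⊕ Unit) where
  dom := {Sum.inr ()}
  cname _ := ∅
  rname _ := ∅
  cname_sub := by simp
  rname_sub := by simp

/-- The empty interpretation. -/
def emptyInterp (β : Type) : Interp β where
  dom := ∅
  cname _ := ∅
  rname _ := ∅
  cname_sub := by simp
  rname_sub := by simp

lemma mem_vars_iff (q : CQ) (hBool : q.ans = []) (v : ℕ) :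
    v ∈ q.vars ↔ v ∈ CQ.vars ⟨q.cas, q.ras, q.atomVars.dedup⟩ := by
  simp [CQ.vars, CQ.atomVars, hBool]

lemma hom_hat {α} (q : CQ) (hBool : q.ans = []) (J : Interp α) (h : ℕ → α) :
    q.Hom J h ↔ CQ.Hom ⟨q.cas, q.ras, q.atomVars.dedup⟩ J h := by
  constructor
  · rintro ⟨h1, h2, h3⟩
    exact ⟨fun v hv => h1 v ((mem_vars_iff q hBool v).mpr hv), h2, h3⟩
  · rintro ⟨h1, h2, h3⟩
    exact ⟨fun v hv => h1 v ((mem_vars_iff q hBool v).mp hv), h2, h3⟩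

/-- The two-level A-interpretation used in the backward direction. -/
def twoLevel {α} (J : Interp α) (L L' : ℕ) : AInterp (α ⊕ Unit) where
  levels := {L, L'}
  prec a b := a = L ∧ b = L'
  interp M := if M = L then liftInterp J else if M = L' then unitInterp α else emptyInterp _
  rho _ _ := none

lemma twoLevel_interp_L {α} (J : Interp α) (L L' : ℕ) :
    (twoLevel J L L').interp L = liftInterp J := if_pos rfl

lemma twoLevel_interp_L' {α} (J : Interp α) {L L' : ℕ} (h : L ≠ L') :
    (twoLevel J L L').interp L' = unitInterp α := by
  simp [twoLevel, Ne.symm h]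

lemma twoLevel_interp_other {α} (J : Interp α) {L L' M : ℕ} (h1 : M ≠ L) (h2 : M ≠ L') :
    (twoLevel J L L').interp M = emptyInterp _ := by
  simp [twoLevel, h1, h2]

/-- Let `O` be an ALCI-ontology, `A₀` a concept name, and `q`
a connected Boolean conjunctive query.  Fix two abstraction levels `L ≺ L'`,
let `q̂` be the full CQ obtained from `q` by making all variables answer
variables, and let `O'` be the `ALCI^abs[ca]`-ontology consisting of
`C ⊑_L D` for every `C ⊑ D ∈ O` together with the concept abstraction
`L':⊥ abstracts L:q̂`.  Then `A₀` is `L`-satisfiable with respect to `O'` if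
and only if `O, A₀ ⊭ q`. -/
theorem alci_abs_ca_reduction_from_cq_entailment
    (O : List (Concept × Concept)) (A₀ : ℕ) (q : CQ) (L L' : ℕ)
    (hBool : q.ans = []) (hconn : q.Connected) (hLL' : L ≠ L') :
    SatList
        (O.map (fun p => Stmt.ci L p.1 p.2) ++
          [Stmt.cabs L' Concept.bot L ⟨q.cas, q.ras, q.atomVars.dedup⟩])
        (Concept.atom A₀) L ↔
      ¬ EntailsCQ O A₀ q := by
  constructor
  · -- forward direction
    intro hSat hent
    simp only [SatList, SatSet] at hSat
    obtain ⟨β, I, hvalid, hsat, d0, hd0⟩ := hSat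
    set J := I.interp L with hJ
    have hd0' : d0 ∈ J.cname A₀ := hd0
    have hdomne : J.dom.Nonempty := ⟨d0, J.cname_sub A₀ hd0'⟩
    have hmodel : J.IsPlainModel O := by
      refine ⟨hdomne, fun p hp => ?_⟩
      have := hsat (Stmt.ci L p.1 p.2)
        (List.mem_append_left _ (List.mem_map_of_mem hp))
      exact this.2
    obtain ⟨h, hh⟩ := hent β J hmodel ⟨d0, hd0'⟩
    have hcabs := hsat (Stmt.cabs L' Concept.bot L ⟨q.cas, q.ras, q.atomVars.dedup⟩)
      (List.mem_append_right _ (List.mem_singleton.mpr rfl))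
    obtain ⟨hprec, habs⟩ := hcabs
    have hthom : CQ.Hom ⟨q.cas, q.ras, q.atomVars.dedup⟩ J h :=
      (hom_hat q hBool J h).mp hh
    obtain ⟨d, hd, -⟩ := habs (q.atomVars.dedup.map h) ⟨h, hthom, rfl⟩
    rw [Interp.sem_bot] at hd
    exact hd
  · -- backward direction
    intro hne
    rw [EntailsCQ] at hne
    push_neg at hne
    obtain ⟨α, J, hmod, hA, hq⟩ := hne
    obtain ⟨a₀, ha₀⟩ := hmod.1
    simp only [SatList, SatSet]
    refine ⟨α ⊕ Unit, twoLevel J L L', ⟨?_, ?_⟩, ?_, ?_⟩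
    · -- well-formedness
      refine ⟨?_, ?_, ?_, ?_, ?_, ?_⟩
      · rintro M (rfl | rfl)
        · rw [twoLevel_interp_L]
          exact ⟨Sum.inl a₀, a₀, ha₀, rfl⟩
        · rw [twoLevel_interp_L' J hLL']
          exact ⟨Sum.inr (), rfl⟩
      · intro M hM
        simp only [twoLevel, Set.mem_insert_iff, Set.mem_singleton_iff, not_or] at hM
        rw [twoLevel_interp_other J hM.1 hM.2]
        rfl
      · intro M M' hMM' d hd hd'
        by_cases hM : M = L
        · subst hM
          rw [twoLevel_interp_L] at hd
          obtain ⟨a, -, rfl⟩ := hd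
          by_cases hM' : M' = L'
          · subst hM'
            rw [twoLevel_interp_L' J hLL'] at hd'
            simp [unitInterp] at hd'
          · rw [twoLevel_interp_other J (Ne.symm hMM') hM'] at hd'
            exact hd'
        · by_cases hM2 : M = L'
          · subst hM2
            rw [twoLevel_interp_L' J hLL'] at hd
            simp only [unitInterp, Set.mem_singleton_iff] at hd
            subst hd
            by_cases hM' : M' = L
            · subst hM'
              rw [twoLevel_interp_L] at hd'
              obtain ⟨a, -, ha⟩ := hd'
              exact absurd ha (by simp)
            · rw [twoLevel_interp_other J hM' (Ne.symm hMM')] at hd'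
              exact hd'
          · rw [twoLevel_interp_other J hM hM2] at hd
            exact hd
      · rintro M M' ⟨rfl, rfl⟩
        exact ⟨Or.inl rfl, Or.inr rfl⟩
      · intro d M t h
        exact absurd h (by simp [twoLevel])
      · intro M d d' t t' h
        exact absurd h (by simp [twoLevel])
    · -- tree level graph
      refine ⟨L', Or.inr rfl, ?_, ?_, ?_⟩
      · rintro u ⟨h1, -⟩
        exact hLL' h1.symm
      · rintro v (rfl | rfl) hv
        · refine ⟨L', ⟨Or.inr rfl, rfl, rfl⟩, ?_⟩
          rintro u ⟨-, -, rfl⟩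
          rfl
        · exact absurd rfl hv
      · rintro v (rfl | rfl)
        · exact Relation.ReflTransGen.single ⟨Or.inr rfl, Or.inl rfl, rfl, rfl⟩
        · exact Relation.ReflTransGen.refl
    · -- satisfaction of all statements
      intro s hs
      rcases List.mem_append.mp hs with hs | hs
      · obtain ⟨p, hp, rfl⟩ := List.mem_map.mp hs
        refine ⟨Or.inl rfl, ?_⟩
        rw [twoLevel_interp_L, liftInterp_sem, liftInterp_sem]
        exact Set.image_mono (hmod.2 p hp)
      · rw [List.mem_singleton.mp hs]
        refine ⟨⟨rfl, rfl⟩, ?_⟩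
        rintro t ⟨h, hhom, rfl⟩
        exfalso
        rw [twoLevel_interp_L] at hhom
        set g : ℕ → α := fun v => Sum.elim id (fun _ => a₀) (h v) with hg
        apply hq g
        refine ⟨?_, ?_, ?_⟩
        · intro v hv
          have := hhom.1 v ((mem_vars_iff q hBool v).mp hv)
          obtain ⟨a, ha, heq⟩ := this
          have : g v = a := by rw [hg]; simp [← heq]
          rw [this]; exact ha
        · intro p hp
          have := hhom.2.1 p hp
          rw [liftInterp_sem] at this
          obtain ⟨a, ha, heq⟩ := this
          have : g p.2 = a := by rw [hg]; simp [← heq]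
          rw [this]; exact ha
        · intro p hp
          have := hhom.2.2 p hp
          obtain ⟨a, b, heq, hab⟩ := this
          have h1 : h p.2.1 = Sum.inl a := congrArg Prod.fst heq
          have h2 : h p.2.2 = Sum.inl b := congrArg Prod.snd heq
          have hg1 : g p.2.1 = a := by rw [hg]; simp [h1]
          have hg2 : g p.2.2 = b := by rw [hg]; simp [h2]
          rw [hg1, hg2]; exact hab
    · -- A₀ nonempty at level L
      rw [twoLevel_interp_L]
      obtain ⟨a, ha⟩ := hA
      exact ⟨Sum.inl a, a, ha, rfl⟩

end DLAbs
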